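/- arXiv:2501.11881 — 6 statements merged into one kernel-verified Lean document; each statement's English description precedes it below -/
import Mathlib

section
/- Let Y be a finite nonempty set, ε ∈ (0, 1/2], L a positive integer, and m : {1,...,L} × Y → [0,1] a cost function (with m(l,y) denoting the cost of y at round l). Define weights w(1,y) = 1 and w(l+1,y) = exp(-ε · Σ_{l'=1}^{l} m(l',y)), and mixed strategies f(l,y) = w(l,y) / Σ_{y'∈Y} w(l,y'). Then for every y ∈ Y: (1-ε) · Σ_{l=1}^{L} Σ_{y'∈Y} f(l,y')·m(l,y') ≤ Σ_{l=1}^{L} m(l,y) + (ln |Y|)/ε. -/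
/-!
Track the potential `Φₙ = ∑ᵧ exp (-ε Sₙ(y))`, where `Sₙ(y)` is the cumulative cost of `y` after
`n` rounds. By convexity of `exp`, a round whose expected cost under the current mixed strategy
is `E` multiplies the potential by at most `1 - (1 - e^{-ε}) E ≤ exp (-(1 - e^{-ε}) E)`, while
`Φ₀ = |Y|`. Since the potential dominates each of its summands,
`exp (-ε Sₙ(y)) ≤ |Y| · exp (-(1 - e^{-ε}) ∑ E)`; taking logarithms and using
`ε (1 - ε) ≤ 1 - e^{-ε}` gives the bound.
-/

open Finset Real

lemma Real.exp_neg_mul_le_one_sub_mul (ε : ℝ) {x : ℝ} (hx0 : 0 ≤ x) (hx1 : x ≤ 1) :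
    exp (-ε * x) ≤ 1 - (1 - exp (-ε)) * x := by
  have := convexOn_exp.2 (Set.mem_univ 0) (Set.mem_univ (-ε)) (sub_nonneg.2 hx1) hx0 (by ring)
  simp only [smul_eq_mul, mul_zero, zero_add, exp_zero, mul_one] at this
  calc exp (-ε * x) = exp (x * -ε) := by ring_nf
    _ ≤ 1 - x + x * exp (-ε) := this
    _ = 1 - (1 - exp (-ε)) * x := by ring

lemma Real.mul_one_sub_le_one_sub_exp_neg {ε : ℝ} (hε : 0 ≤ ε) :
    ε * (1 - ε) ≤ 1 - exp (-ε) := by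
  -- `e^{-ε} ≤ 1 / (1 + ε) ≤ 1 - ε + ε²`, as `(1 + ε)(1 - ε + ε²) = 1 + ε³`
  have h := add_one_le_exp ε
  have h' : exp (-ε) * exp ε = 1 := by rw [← exp_add, neg_add_cancel, exp_zero]
  nlinarith [exp_pos (-ε), pow_nonneg hε 3, mul_le_mul_of_nonneg_left h (exp_pos (-ε)).le]

lemma Fin.sum_filter_lt_eq_sum_range {M : Type*} [AddCommMonoid M] {L : ℕ} (g : ℕ → M)
    (l : Fin L) : ∑ l' ∈ univ.filter (· < l), g l' = ∑ k ∈ range l, g k := by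
  rw [filter_gt_eq_Iio, ← Nat.Iio_eq_range, ← Fin.map_valEmbedding_Iio, sum_map]
  rfl

namespace Hedge

noncomputable section

variable {Y : Type*} (ε : ℝ) (c : ℕ → Y → ℝ)

def cumulativeCost (n : ℕ) (y : Y) : ℝ := ∑ k ∈ range n, c k y

def weight (n : ℕ) (y : Y) : ℝ := exp (-ε * cumulativeCost c n y)

lemma weight_succ (n : ℕ) (y : Y) :
    weight ε c (n + 1) y = weight ε c n y * exp (-ε * c n y) := by
  rw [weight, weight, cumulativeCost, sum_range_succ, ← exp_add, mul_add, cumulativeCost]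

variable [Fintype Y]

def potential (n : ℕ) : ℝ := ∑ y, weight ε c n y

def strategy (n : ℕ) (y : Y) : ℝ := weight ε c n y / potential ε c n

def expectedCost (n : ℕ) : ℝ := ∑ y, strategy ε c n y * c n y

lemma weight_le_potential (n : ℕ) (y : Y) : weight ε c n y ≤ potential ε c n :=
  single_le_sum (f := weight ε c n) (fun _ _ => (exp_pos _).le) (mem_univ y)

lemma potential_zero : potential ε c 0 = Fintype.card Y := by
  simp [potential, weight, cumulativeCost]

lemma potential_pos [Nonempty Y] (n : ℕ) : 0 < potential ε c n :=
  sum_pos (fun _ _ => exp_pos _) univ_nonempty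

lemma sum_weight_mul_eq_potential_mul_expectedCost [Nonempty Y] (n : ℕ) :
    ∑ y, weight ε c n y * c n y = potential ε c n * expectedCost ε c n := by
  rw [expectedCost, mul_sum]
  refine sum_congr rfl fun y _ => ?_
  rw [strategy, ← mul_assoc, mul_div_cancel₀ _ (potential_pos ε c n).ne']

lemma potential_succ_le [Nonempty Y] (n : ℕ) (h0 : ∀ y, 0 ≤ c n y) (h1 : ∀ y, c n y ≤ 1) :
    potential ε c (n + 1) ≤
      potential ε c n * exp (-(1 - exp (-ε)) * expectedCost ε c n) := by
  set β := 1 - exp (-ε)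
  calc potential ε c (n + 1) = ∑ y, weight ε c n y * exp (-ε * c n y) := by
        simp only [potential, weight_succ]
    _ ≤ ∑ y, weight ε c n y * (1 - β * c n y) :=
        sum_le_sum fun y _ => mul_le_mul_of_nonneg_left
          (exp_neg_mul_le_one_sub_mul ε (h0 y) (h1 y)) (exp_pos _).le
    _ = potential ε c n * (1 - β * expectedCost ε c n) := by
        simp only [mul_sub, mul_one, sum_sub_distrib, mul_left_comm _ β, ← mul_sum,
          sum_weight_mul_eq_potential_mul_expectedCost, potential]
    _ ≤ potential ε c n * exp (-β * expectedCost ε c n) :=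
        mul_le_mul_of_nonneg_left (by linarith [add_one_le_exp (-β * expectedCost ε c n)])
          (potential_pos ε c n).le

lemma potential_le [Nonempty Y] (n : ℕ) (h0 : ∀ k < n, ∀ y, 0 ≤ c k y)
    (h1 : ∀ k < n, ∀ y, c k y ≤ 1) :
    potential ε c n ≤
      Fintype.card Y * exp (-(1 - exp (-ε)) * ∑ k ∈ range n, expectedCost ε c k) := by
  induction n with
  | zero => simp [potential_zero]
  | succ n ih =>
    have ih := ih (fun k hk => h0 k (by omega)) (fun k hk => h1 k (by omega))
    calc potential ε c (n + 1)
        ≤ potential ε c n * exp (-(1 - exp (-ε)) * expectedCost ε c n) :=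
          potential_succ_le ε c n (h0 n n.lt_succ_self) (h1 n n.lt_succ_self)
      _ ≤ Fintype.card Y * exp (-(1 - exp (-ε)) * ∑ k ∈ range n, expectedCost ε c k) *
            exp (-(1 - exp (-ε)) * expectedCost ε c n) := by gcongr
      _ = Fintype.card Y *
            exp (-(1 - exp (-ε)) * ∑ k ∈ range (n + 1), expectedCost ε c k) := by
          rw [mul_assoc, ← exp_add, sum_range_succ, mul_add]

lemma strategy_nonneg (n : ℕ) (y : Y) : 0 ≤ strategy ε c n y :=
  div_nonneg (exp_pos _).le (sum_nonneg fun _ _ => (exp_pos _).le)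

lemma expectedCost_nonneg (n : ℕ) (h0 : ∀ y, 0 ≤ c n y) : 0 ≤ expectedCost ε c n :=
  sum_nonneg fun y _ => mul_nonneg (strategy_nonneg ε c n y) (h0 y)

theorem one_sub_exp_neg_mul_sum_expectedCost_le (n : ℕ) (h0 : ∀ k < n, ∀ y, 0 ≤ c k y)
    (h1 : ∀ k < n, ∀ y, c k y ≤ 1) (y : Y) :
    (1 - exp (-ε)) * ∑ k ∈ range n, expectedCost ε c k ≤
      ε * cumulativeCost c n y + log (Fintype.card Y) := by
  have : Nonempty Y := ⟨y⟩
  have hcard : (0 : ℝ) < Fintype.card Y := by exact_mod_cast Fintype.card_pos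
  have h := (weight_le_potential ε c n y).trans (potential_le ε c n h0 h1)
  have hlog := log_le_log (exp_pos _) h
  rw [log_exp, log_mul hcard.ne' (exp_pos _).ne', log_exp] at hlog
  linarith

theorem one_sub_mul_sum_expectedCost_le (hε : 0 < ε) (n : ℕ) (h0 : ∀ k < n, ∀ y, 0 ≤ c k y)
    (h1 : ∀ k < n, ∀ y, c k y ≤ 1) (y : Y) :
    (1 - ε) * ∑ k ∈ range n, expectedCost ε c k ≤
      cumulativeCost c n y + log (Fintype.card Y) / ε := by
  have hE := sum_nonneg fun k hk => expectedCost_nonneg ε c k (h0 k (mem_range.1 hk))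
  have hβ := mul_le_mul_of_nonneg_right (mul_one_sub_le_one_sub_exp_neg hε.le) hE
  have h := one_sub_exp_neg_mul_sum_expectedCost_le ε c n h0 h1 y
  rw [add_div' _ _ _ hε.ne', le_div_iff₀' hε]
  nlinarith

end

end Hedge

open Finset in
theorem mwu_regret_bound_general {Y : Type*} [Fintype Y]
    (ε : ℝ) (hε0 : 0 < ε)
    (L : ℕ)
    (m : Fin L → Y → ℝ) (hm0 : ∀ l y, 0 ≤ m l y) (hm1 : ∀ l y, m l y ≤ 1)
    (w : Fin L → Y → ℝ)
    (hw : ∀ l y, w l y = Real.exp (-ε * ∑ l' ∈ univ.filter (fun l' : Fin L => l' < l), m l' y))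
    (f : Fin L → Y → ℝ)
    (hf : ∀ l y, f l y = w l y / ∑ y' : Y, w l y') :
    ∀ y : Y,
      (1 - ε) * ∑ l : Fin L, ∑ y' : Y, f l y' * m l y' ≤
        (∑ l : Fin L, m l y) + Real.log (Fintype.card Y) / ε := by
  intro y
  set c : ℕ → Y → ℝ := Function.extend Fin.val m 0
  have hc (l : Fin L) : c l = m l := Fin.val_injective.extend_apply m 0 l
  have hw' (l : Fin L) : w l = Hedge.weight ε c l := by
    ext y'
    simp only [hw, Hedge.weight, Hedge.cumulativeCost, ← hc]
    rw [Fin.sum_filter_lt_eq_sum_range (c · y')]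
  have hf' (l : Fin L) : f l = Hedge.strategy ε c l := by
    ext y'
    simp only [hf, hw', Hedge.strategy, Hedge.potential]
  have h := Hedge.one_sub_mul_sum_expectedCost_le ε c hε0 L
    (fun k hk => hc ⟨k, hk⟩ ▸ hm0 _) (fun k hk => hc ⟨k, hk⟩ ▸ hm1 _) y
  rw [Hedge.cumulativeCost, ← Fin.sum_univ_eq_sum_range, ← Fin.sum_univ_eq_sum_range] at h
  simpa only [Hedge.expectedCost, hf', hc] using h

open Finset in
/-- Regret bound for the Hedge (multiplicative weight update) algorithm. -/
theorem mwu_regret_bound {Y : Type*} [Fintype Y] [Nonempty Y]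
    (ε : ℝ) (hε0 : 0 < ε) (hε1 : ε ≤ 1/2)
    (L : ℕ) (hL : 0 < L)
    (m : Fin L → Y → ℝ) (hm0 : ∀ l y, 0 ≤ m l y) (hm1 : ∀ l y, m l y ≤ 1)
    (w : Fin L → Y → ℝ)
    (hw : ∀ l y, w l y = Real.exp (-ε * ∑ l' ∈ univ.filter (fun l' : Fin L => l' < l), m l' y))
    (f : Fin L → Y → ℝ)
    (hf : ∀ l y, f l y = w l y / ∑ y' : Y, w l y') :
    ∀ y : Y,
      (1 - ε) * ∑ l : Fin L, ∑ y' : Y, f l y' * m l y' ≤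
        (∑ l : Fin L, m l y) + Real.log (Fintype.card Y) / ε :=
  mwu_regret_bound_general ε hε0 L m hm0 hm1 w hw f hf
end

section
/- Let X, Y be finite sets, P a distribution on X, W a channel from X to Y, S ⊆ X × Y, and define W_x^S, W_P^S, s(W_P^S) and D_max as above. Fix ε ∈ (0,1/2] and L ≥ e^{D_max} · ln|Y| / ε². Suppose a sequence x_1,...,x_L ∈ X satisfies, for every y ∈ s(W_P^S), Σ_{l=1}^L (W_{x_l}^S(y)/W_P^S(y))·e^{-D_max} ≥ (1-ε)·L·e^{-D_max} - ln|s(W_P^S)|/ε. Then letting W_C^S(y) = (1/L)·Σ_{l=1}^L W_{x_l}^S(y), for every y ∈ Y: W_P^S(y) - W_C^S(y) ≤ 2ε·W_P^S(y). -/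
/-!
Multiplying the cost bound at `y` by `e^{D_max}` gives
`∑ₗ W_{x_l}^S(y) / W_P^S(y) ≥ (1 - ε) L - e^{D_max} ln |s(W_P^S)| / ε`, and since
`|s(W_P^S)| ≤ |Y|` the choice of `L` makes the correction term at most `ε L`.
Dividing by `L` gives `W_C^S(y) ≥ (1 - 2ε) W_P^S(y)`. Off the support `W_P^S(y) = 0`,
and nonnegativity of `W_C^S(y)` suffices.
-/

theorem le_of_exp_neg_mul_ge {s L ε D a : ℝ} (hε : 0 < ε)
    (ha : Real.exp D * a ≤ ε ^ 2 * L)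
    (hs : (1 - ε) * L * Real.exp (-D) - a / ε ≤ s * Real.exp (-D)) :
    (1 - 2 * ε) * L ≤ s := by
  have hexp : Real.exp (-D) * Real.exp D = 1 := by rw [← Real.exp_add]; simp
  have hs' : (1 - ε) * L - Real.exp D * a / ε ≤ s := by
    have := mul_le_mul_of_nonneg_right hs (Real.exp_pos D).le
    calc (1 - ε) * L - Real.exp D * a / ε
        = ((1 - ε) * L * Real.exp (-D) - a / ε) * Real.exp D := by
          field_simp
          linear_combination -ε * (1 - ε) * L * hexp
      _ ≤ s * Real.exp (-D) * Real.exp D := this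
      _ = s := by rw [mul_assoc, hexp, mul_one]
  have hcorr : Real.exp D * a / ε ≤ ε * L := by
    rw [div_le_iff₀ hε]
    linarith
  linarith

theorem Real.log_card_subtype_le_log_card {α : Type*} [Fintype α] (p : α → Prop)
    [Fintype {a // p a}] :
    Real.log (Fintype.card {a // p a}) ≤ Real.log (Fintype.card α) := by
  rcases Nat.eq_zero_or_pos (Fintype.card {a // p a}) with h | h
  · rw [h, Nat.cast_zero, Real.log_zero]
    exact Real.log_natCast_nonneg _
  · exact Real.log_le_log (by exact_mod_cast h) (by exact_mod_cast Fintype.card_subtype_le p)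

open Finset Classical in
theorem channel_resolvability_performance_general {X Y : Type*} [Fintype X] [Fintype Y]
    (P : X → ℝ) (hP0 : ∀ x, 0 ≤ P x)
    (W : X → Y → ℝ) (hW0 : ∀ x y, 0 ≤ W x y)
    (S : Finset (X × Y))
    (WxS : X → Y → ℝ) (hWxS : ∀ x y, WxS x y = if (x, y) ∈ S then W x y else 0)
    (WPS : Y → ℝ) (hWPS : ∀ y, WPS y = ∑ x : X, P x * WxS x y)
    (Dmax : ℝ)
    (ε : ℝ) (hε0 : 0 < ε)
    (L : ℕ) (hLpos : 0 < L)
    (hL : (L : ℝ) ≥ Real.exp Dmax * Real.log (Fintype.card Y) / ε ^ 2)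
    (xl : Fin L → X)
    (hcost : ∀ y, 0 < WPS y →
      ∑ l : Fin L, WxS (xl l) y / WPS y * Real.exp (-Dmax) ≥
        (1 - ε) * L * Real.exp (-Dmax) -
          Real.log (Fintype.card {y : Y // 0 < WPS y}) / ε)
    (WCS : Y → ℝ) (hWCS : ∀ y, WCS y = (1 / (L : ℝ)) * ∑ l : Fin L, WxS (xl l) y) :
    ∀ y : Y, WPS y - WCS y ≤ 2 * ε * WPS y := by
  intro y
  have hWxS0 : ∀ x, 0 ≤ WxS x y := fun x => by
    rw [hWxS]; split_ifs <;> simp [hW0]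
  have hWPS0 : 0 ≤ WPS y := by
    rw [hWPS]; exact sum_nonneg fun x _ => mul_nonneg (hP0 x) (hWxS0 x)
  have hL0 : (0 : ℝ) < L := by exact_mod_cast hLpos
  rcases hWPS0.eq_or_lt with hzero | hpos
  · have hWCS0 : 0 ≤ WCS y := by
      rw [hWCS]; exact mul_nonneg (by positivity) (sum_nonneg fun l _ => hWxS0 _)
    rw [← hzero]; linarith
  · have hratio : (1 - 2 * ε) * L ≤ (∑ l : Fin L, WxS (xl l) y) / WPS y := by
      refine le_of_exp_neg_mul_ge hε0 ?_ (by simpa [← sum_div, ← sum_mul] using hcost y hpos)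
      calc Real.exp Dmax * Real.log (Fintype.card {y : Y // 0 < WPS y})
          ≤ Real.exp Dmax * Real.log (Fintype.card Y) :=
            mul_le_mul_of_nonneg_left (Real.log_card_subtype_le_log_card _) (Real.exp_pos _).le
        _ ≤ ε ^ 2 * L := (div_le_iff₀' (by positivity)).mp hL
    rw [le_div_iff₀ hpos] at hratio
    have : (1 - 2 * ε) * WPS y ≤ WCS y := by
      rw [hWCS, one_div, inv_mul_eq_div, le_div_iff₀ hL0]; linarith
    linarith

open Finset Classical in
/-- Codebook performance: the truncated codebook output distribution dominates
`(1-2ε)` times the truncated target output distribution pointwise. -/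
theorem channel_resolvability_performance {X Y : Type*} [Fintype X] [Fintype Y]
    (P : X → ℝ) (hP0 : ∀ x, 0 ≤ P x) (hP1 : ∑ x : X, P x = 1)
    (W : X → Y → ℝ) (hW0 : ∀ x y, 0 ≤ W x y) (hW1 : ∀ x, ∑ y : Y, W x y = 1)
    (S : Finset (X × Y))
    (WxS : X → Y → ℝ) (hWxS : ∀ x y, WxS x y = if (x, y) ∈ S then W x y else 0)
    (WPS : Y → ℝ) (hWPS : ∀ y, WPS y = ∑ x : X, P x * WxS x y)
    (Dmax : ℝ)
    (hD : IsGreatest {r : ℝ | ∃ x y, (x, y) ∈ S ∧ 0 < WPS y ∧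
            r = Real.log (WxS x y / WPS y)} Dmax)
    (ε : ℝ) (hε0 : 0 < ε) (hε1 : ε ≤ 1/2)
    (L : ℕ) (hLpos : 0 < L)
    (hL : (L : ℝ) ≥ Real.exp Dmax * Real.log (Fintype.card Y) / ε ^ 2)
    (xl : Fin L → X)
    (hcost : ∀ y, 0 < WPS y →
      ∑ l : Fin L, WxS (xl l) y / WPS y * Real.exp (-Dmax) ≥
        (1 - ε) * L * Real.exp (-Dmax) -
          Real.log (Fintype.card {y : Y // 0 < WPS y}) / ε)
    (WCS : Y → ℝ) (hWCS : ∀ y, WCS y = (1 / (L : ℝ)) * ∑ l : Fin L, WxS (xl l) y) :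
    ∀ y : Y, WPS y - WCS y ≤ 2 * ε * WPS y :=
  channel_resolvability_performance_general P hP0 W hW0 S WxS hWxS WPS hWPS Dmax ε hε0 L hLpos hL xl
    hcost WCS hWCS
end

section
/- Let X, Y be finite sets, P a distribution on X, W a channel from X to Y, S ⊆ X × Y, and C = {x_1,...,x_L} ⊆ X a multiset of codewords with W_C(y) = (1/L)Σ_l W_{x_l}(y). Suppose for every y ∈ Y, W_P^S(y) - W_C^S(y) ≤ 2ε·W_P^S(y) (where superscript S denotes restriction to S). Then the total variation distance satisfies d_var(W_P, W_C) ≤ 2ε + Σ_{(x,y)∈S^c} P(x)·W_x(y). -/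
/-!
Since `W_P` and `W_C` are both probability vectors, `d_var(W_P, W_C)` is the total positive part
of `W_P - W_C`. Pointwise, `W_P - W_C ≤ (W_P - W_P^S) + (W_P^S - W_C^S) ≤ (W_P - W_P^S) + 2ε W_P^S`
because truncation only lowers `W_C`; summing over `y` gives the escaping mass of `S` plus
`2ε · W_P^S(Y) ≤ 2ε`.
-/

open Finset

section TotalVariation

variable {ι : Type*} [Fintype ι]

theorem sum_abs_sub_eq_two_mul_sum_posPart {f g : ι → ℝ} (h : ∑ i, f i = ∑ i, g i) :
    ∑ i, |f i - g i| = 2 * ∑ i, (f i - g i)⁺ := by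
  have habs : ∀ a : ℝ, |a| = 2 * a⁺ - a := fun a => by
    rw [← posPart_add_negPart]
    linarith [posPart_sub_negPart a]
  simp only [habs, sum_sub_distrib, ← mul_sum, h, sub_self, sub_zero]

theorem half_sum_abs_sub_le_of_truncated_domination {p q p' q' : ι → ℝ} {ε : ℝ}
    (hpq : ∑ i, p i = ∑ i, q i) (hp'0 : ∀ i, 0 ≤ p' i) (hp'p : ∀ i, p' i ≤ p i)
    (hq'q : ∀ i, q' i ≤ q i) (hε : 0 ≤ ε) (hdom : ∀ i, p' i - q' i ≤ 2 * ε * p' i) :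
    (1 / 2) * ∑ i, |p i - q i| ≤ 2 * ε * ∑ i, p' i + ∑ i, (p i - p' i) := by
  have hpos : ∀ i, (p i - q i)⁺ ≤ 2 * ε * p' i + (p i - p' i) := fun i =>
    sup_le (by linarith [hdom i, hq'q i])
      (by nlinarith [hp'0 i, hp'p i])
  have hsum := sum_le_sum fun i (_ : i ∈ univ) => hpos i
  rw [sum_add_distrib, ← mul_sum] at hsum
  linarith [sum_abs_sub_eq_two_mul_sum_posPart hpq]

end TotalVariation

section Channel

variable {ι Y : Type*} [Fintype ι] [Fintype Y]

theorem sum_mixture_eq_one {q : ι → ℝ} (hq : ∑ i, q i = 1) {W : ι → Y → ℝ}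
    (hW : ∀ i, ∑ y, W i y = 1) : ∑ y, ∑ i, q i * W i y = 1 := by
  rw [sum_comm]
  simp only [← mul_sum, hW, mul_one, hq]

theorem sum_sub_sum_truncate_eq_sum_compl [DecidableEq ι] [DecidableEq Y]
    (S : Finset (ι × Y)) (F : ι → Y → ℝ) :
    ∑ y, (∑ i, F i y - ∑ i, if (i, y) ∈ S then F i y else 0) = ∑ p ∈ Sᶜ, F p.1 p.2 := by
  rw [sum_sub_distrib, sum_comm, sum_comm (f := fun y i => if (i, y) ∈ S then F i y else 0),
    ← Fintype.sum_prod_type' F,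
    ← Fintype.sum_prod_type' (fun i y => if (i, y) ∈ S then F i y else 0),
    sum_ite_mem, univ_inter, ← sum_compl_add_sum S, add_sub_cancel_right]

end Channel

open Finset Classical in
/-- From pointwise domination on the truncated measure to a bound on total
variation distance plus the escaping probability of `S`. -/
theorem singleshot_tv_from_domination {X Y : Type*} [Fintype X] [Fintype Y]
    (P : X → ℝ) (hP0 : ∀ x, 0 ≤ P x) (hP1 : ∑ x : X, P x = 1)
    (W : X → Y → ℝ) (hW0 : ∀ x y, 0 ≤ W x y) (hW1 : ∀ x, ∑ y : Y, W x y = 1)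
    (S : Finset (X × Y))
    (L : ℕ) (hLpos : 0 < L) (xl : Fin L → X)
    (ε : ℝ) (hε0 : 0 ≤ ε)
    (WP : Y → ℝ) (hWP : ∀ y, WP y = ∑ x : X, P x * W x y)
    (WC : Y → ℝ) (hWC : ∀ y, WC y = (1 / (L : ℝ)) * ∑ l : Fin L, W (xl l) y)
    (WPS : Y → ℝ)
    (hWPS : ∀ y, WPS y = ∑ x : X, P x * (if (x, y) ∈ S then W x y else 0))
    (WCS : Y → ℝ)
    (hWCS : ∀ y, WCS y = (1 / (L : ℝ)) *
      ∑ l : Fin L, (if (xl l, y) ∈ S then W (xl l) y else 0))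
    (hdom : ∀ y, WPS y - WCS y ≤ 2 * ε * WPS y) :
    (1 / 2) * ∑ y : Y, |WP y - WC y| ≤
      2 * ε + ∑ p ∈ Sᶜ, P p.1 * W p.1 p.2 := by
  have htrunc_le : ∀ x y, (if (x, y) ∈ S then W x y else 0) ≤ W x y := fun x y => by
    split_ifs <;> simp [hW0]
  have hWP1 : ∑ y, WP y = 1 := by simpa only [hWP] using sum_mixture_eq_one hP1 hW1
  have hWC1 : ∑ y, WC y = 1 := by
    have hL : (L : ℝ) ≠ 0 := by positivity
    simpa only [hWC, mul_sum] using
      sum_mixture_eq_one (q := fun _ : Fin L => 1 / (L : ℝ)) (by simp [hL]) (fun l => hW1 (xl l))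
  have hWPS0 : ∀ y, 0 ≤ WPS y := fun y => by
    rw [hWPS]
    exact sum_nonneg fun x _ => mul_nonneg (hP0 x) (ite_nonneg (hW0 x y) le_rfl)
  have hWPS_le : ∀ y, WPS y ≤ WP y := fun y => by
    rw [hWPS, hWP]
    gcongr with x
    exacts [hP0 x, htrunc_le x y]
  have hWCS_le : ∀ y, WCS y ≤ WC y := fun y => by
    rw [hWCS, hWC]
    gcongr with l
    exact htrunc_le (xl l) y
  have hescape : ∑ y, (WP y - WPS y) = ∑ p ∈ Sᶜ, P p.1 * W p.1 p.2 := by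
    simp only [hWP, hWPS, mul_ite, mul_zero]
    exact sum_sub_sum_truncate_eq_sum_compl S (fun x y => P x * W x y)
  have hWPS1 : ∑ y, WPS y ≤ 1 := hWP1 ▸ sum_le_sum fun y _ => hWPS_le y
  calc (1 / 2) * ∑ y, |WP y - WC y|
      ≤ 2 * ε * ∑ y, WPS y + ∑ y, (WP y - WPS y) :=
        half_sum_abs_sub_le_of_truncated_domination (hWP1.trans hWC1.symm) hWPS0 hWPS_le hWCS_le
          hε0 hdom
    _ ≤ 2 * ε + ∑ p ∈ Sᶜ, P p.1 * W p.1 p.2 := by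
        rw [hescape]
        linarith [mul_le_of_le_one_right (by linarith : (0 : ℝ) ≤ 2 * ε) hWPS1]
end

section
/- Let W be a channel from finite set X to finite set Y and P, T distributions on X with d_var(P,T) ≤ √(ν/2) ≤ 1/2. Then |I(T,W) - I(P,W)| ≤ (3√(2ν)/2)·ln|Y| - √(ν/2)·ln(√(ν/2)), where I(P,W) = H(W_P) - H(W|P) is the mutual information between input distributed as P and the channel output. -/
section helpers
open Real Finset

lemma gibbs_pt {x N : ℝ} (hx : 0 ≤ x) (hN : 0 < N) :
    Real.negMulLog x ≤ x * Real.log N + 1/N - x := by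
  rcases eq_or_lt_of_le hx with h|h
  · simp [← h]
    positivity
  · have hxN : (0:ℝ) < 1/(x*N) := by positivity
    have h1 := Real.log_le_sub_one_of_pos hxN
    rw [one_div, Real.log_inv, Real.log_mul (ne_of_gt h) (ne_of_gt hN)] at h1
    have h2 : -Real.log x ≤ Real.log N + (x*N)⁻¹ - 1 := by linarith
    have h3 : x * (-Real.log x) ≤ x * (Real.log N + (x*N)⁻¹ - 1) :=
      mul_le_mul_of_nonneg_left h2 hx
    have hx0 : x ≠ 0 := ne_of_gt h
    calc Real.negMulLog x = x * (-Real.log x) := by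
          rw [Real.negMulLog]; ring
      _ ≤ x * (Real.log N + (x*N)⁻¹ - 1) := h3
      _ = x * Real.log N + 1/N - x := by field_simp

lemma gibbs_sum {α : Type*} (S : Finset α) (f : α → ℝ) (h0 : ∀ y ∈ S, 0 ≤ f y)
    (h1 : ∑ y ∈ S, f y = 1) :
    ∑ y ∈ S, Real.negMulLog (f y) ≤ Real.log S.card := by
  have hS : S.Nonempty := by
    rw [← Finset.card_pos]
    by_contra h
    push_neg at h
    interval_cases h' : S.card
    · rw [Finset.card_eq_zero] at h'
      subst h'
      simp at h1
  have hN : (0:ℝ) < S.card := by exact_mod_cast hS.card_pos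
  calc ∑ y ∈ S, Real.negMulLog (f y)
      ≤ ∑ y ∈ S, (f y * Real.log S.card + 1/(S.card:ℝ) - f y) :=
        Finset.sum_le_sum (fun y hy => gibbs_pt (h0 y hy) hN)
    _ = Real.log S.card := by
        rw [Finset.sum_sub_distrib, Finset.sum_add_distrib, ← Finset.sum_mul, h1,
          Finset.sum_const]
        field_simp
        rw [nsmul_eq_mul, mul_one_div_cancel (ne_of_gt hN)]; ring


lemma eta_subadd {a b : ℝ} (ha : 0 ≤ a) (hb : 0 ≤ b) :
    Real.negMulLog (a + b) ≤ Real.negMulLog a + Real.negMulLog b := by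
  have key : ∀ u v : ℝ, 0 ≤ u → 0 ≤ v → -(u * Real.log (u + v)) ≤ Real.negMulLog u := by
    intro u v hu hv
    rcases eq_or_lt_of_le hu with h|h
    · simp [← h]
    · have : Real.log u ≤ Real.log (u + v) := Real.log_le_log h (by linarith)
      rw [Real.negMulLog]
      nlinarith
  have h1 := key a b ha hb
  have h2 := key b a hb ha
  have h3 : Real.negMulLog (a + b) = -(a * Real.log (a+b)) + -(b * Real.log (b+a)) := by
    rw [Real.negMulLog]; ring_nf
  rw [h3]
  exact add_le_add h1 h2

lemma eta_add_ge {μ d σ : ℝ} (hμ : 0 ≤ μ) (hd : 0 ≤ d) (hdσ : d ≤ σ)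
    (hσ : 0 < σ) (hσ1 : σ < 1) :
    Real.negMulLog μ + μ * Real.log (1 - σ) ≤ Real.negMulLog (μ + d) := by
  have h1σ : (0:ℝ) < 1 - σ := by linarith
  have hμb : μ * Real.log (μ+d) + μ - (1-σ)*(μ+d) ≤ μ * Real.log μ - μ * Real.log (1-σ) := by
    rcases eq_or_lt_of_le hμ with h|h
    · rw [← h]; simp; nlinarith
    · have hxp : 0 < μ + d := by linarith
      have hq : (0:ℝ) < (1-σ)*(μ+d)/μ := by positivity
      have h1 := Real.log_le_sub_one_of_pos hq
      rw [Real.log_div (by positivity) (ne_of_gt h),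
        Real.log_mul (ne_of_gt h1σ) (ne_of_gt hxp)] at h1
      have h2 := mul_le_mul_of_nonneg_left h1 hμ
      have h4 : μ * ((1-σ)*(μ+d)/μ - 1) = (1-σ)*(μ+d) - μ := by field_simp
      nlinarith [h2]
  have hdb : d * Real.log (μ+d) + d - σ*(μ+d) ≤ d * Real.log d - d * Real.log σ := by
    rcases eq_or_lt_of_le hd with h|h
    · rw [← h]; simp; nlinarith
    · have hxp : 0 < μ + d := by linarith
      have hq : (0:ℝ) < σ*(μ+d)/d := by positivity
      have h1 := Real.log_le_sub_one_of_pos hq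
      rw [Real.log_div (by positivity) (ne_of_gt h),
        Real.log_mul (ne_of_gt hσ) (ne_of_gt hxp)] at h1
      have h2 := mul_le_mul_of_nonneg_left h1 hd
      have h4 : d * (σ*(μ+d)/d - 1) = σ*(μ+d) - d := by field_simp
      nlinarith [h2]
  have hds : d * Real.log d - d * Real.log σ ≤ 0 := by
    rcases eq_or_lt_of_le hd with h|h
    · rw [← h]; simp
    · have : Real.log d ≤ Real.log σ := Real.log_le_log h hdσ
      nlinarith
  rw [Real.negMulLog, Real.negMulLog]
  have hexp : (μ+d) * Real.log (μ+d) = μ * Real.log (μ+d) + d * Real.log (μ+d) := by ring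
  nlinarith [hμb, hdb, hds]

-- tangent line inequality for negMulLog (concavity at s)
lemma eta_tangent {σ s : ℝ} (hσ : 0 ≤ σ) (hs : 0 < s) :
    Real.negMulLog σ ≤ Real.negMulLog s + (σ - s) * (-Real.log s - 1) := by
  rcases eq_or_lt_of_le hσ with h|h
  · rw [← h]; simp [Real.negMulLog]; nlinarith
  · have hq : (0:ℝ) < s/σ := by positivity
    have h1 := Real.log_le_sub_one_of_pos hq
    rw [Real.log_div (ne_of_gt hs) (ne_of_gt h)] at h1
    have h2 := mul_le_mul_of_nonneg_left h1 (le_of_lt h)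
    have h4 : σ * (s/σ - 1) = s - σ := by field_simp
    rw [Real.negMulLog, Real.negMulLog]
    nlinarith [h2]

-- η(1-σ) ≤ σ
lemma eta_one_sub {σ : ℝ} (hσ : 0 ≤ σ) (hσ1 : σ < 1) :
    Real.negMulLog (1 - σ) ≤ σ := by
  have h1σ : (0:ℝ) < 1 - σ := by linarith
  have h1 := Real.log_le_sub_one_of_pos (show (0:ℝ) < (1-σ)⁻¹ by positivity)
  rw [Real.log_inv] at h1
  have h2 : (1-σ) * (-Real.log (1-σ)) ≤ (1-σ) * ((1-σ)⁻¹ - 1) :=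
    mul_le_mul_of_nonneg_left h1 (le_of_lt h1σ)
  have h3 : (1-σ) * ((1-σ)⁻¹ - 1) = σ := by field_simp; ring
  rw [Real.negMulLog]
  nlinarith [h2]

lemma ent_diff {Y : Type*} [Fintype Y] (p q : Y → ℝ)
    (hp0 : ∀ y, 0 ≤ p y) (hp1 : ∑ y : Y, p y = 1)
    (hq0 : ∀ y, 0 ≤ q y) (hq1 : ∑ y : Y, q y = 1)
    (hm : 2 ≤ Fintype.card Y) (s : ℝ)
    (hs : (1/2) * ∑ y : Y, |p y - q y| ≤ s) (hs2 : s ≤ 1/2) :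
    ∑ y : Y, Real.negMulLog (p y) - ∑ y : Y, Real.negMulLog (q y) ≤
      s * Real.log ((Fintype.card Y : ℝ) - 1) + Real.negMulLog s + s := by
  classical
  have hm1 : (1:ℝ) ≤ (Fintype.card Y : ℝ) - 1 := by
    have : (2:ℝ) ≤ (Fintype.card Y : ℝ) := by exact_mod_cast hm
    linarith
  have hlogm : 0 ≤ Real.log ((Fintype.card Y : ℝ) - 1) := Real.log_nonneg hm1
  set σ : ℝ := (1/2) * ∑ y : Y, |p y - q y| with hσdef
  have hσ0 : 0 ≤ σ := by
    have : 0 ≤ ∑ y : Y, |p y - q y| := Finset.sum_nonneg (fun y _ => abs_nonneg _)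
    positivity
  have hσs : σ ≤ s := hs
  rcases eq_or_lt_of_le hσ0 with hσz|hσpos
  · -- σ = 0 : p = q
    have habs : ∑ y : Y, |p y - q y| = 0 := by
      have : (2:ℝ) * σ = ∑ y : Y, |p y - q y| := by rw [hσdef]; ring
      rw [← this, ← hσz]; ring
    have hpq : ∀ y, p y = q y := by
      intro y
      have h1 := Finset.sum_eq_zero_iff_of_nonneg
        (fun y (_ : y ∈ Finset.univ) => abs_nonneg (p y - q y)) |>.mp habs y (Finset.mem_univ y)
      have := abs_eq_zero.mp h1
      linarith
    have : ∑ y : Y, Real.negMulLog (p y) = ∑ y : Y, Real.negMulLog (q y) := by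
      apply Finset.sum_congr rfl; intro y _; rw [hpq y]
    rw [this]
    have hs0 : 0 ≤ s := le_trans hσ0 hσs
    have hηs : 0 ≤ Real.negMulLog s := Real.negMulLog_nonneg hs0 (by linarith)
    nlinarith [mul_nonneg hs0 hlogm]
  · -- σ > 0
    have hspos : 0 < s := lt_of_lt_of_le hσpos hσs
    have hσhalf : σ ≤ 1/2 := le_trans hσs hs2
    have hσ1 : σ < 1 := by linarith
    set c : Y → ℝ := fun y => max (p y - q y) 0 with hc
    set d : Y → ℝ := fun y => max (q y - p y) 0 with hd
    set μ : Y → ℝ := fun y => min (p y) (q y) with hμ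
    have hc0 : ∀ y, 0 ≤ c y := fun y => le_max_right _ _
    have hd0 : ∀ y, 0 ≤ d y := fun y => le_max_right _ _
    have hμ0 : ∀ y, 0 ≤ μ y := fun y => le_min (hp0 y) (hq0 y)
    have hpμc : ∀ y, p y = μ y + c y := by
      intro y; rcases le_total (p y) (q y) with h|h
      · simp [hc, hd, hμ, min_eq_left h, max_eq_right (by linarith : p y - q y ≤ 0)]
      · simp [hc, hd, hμ, min_eq_right h, max_eq_left (by linarith : 0 ≤ p y - q y)]
    have hqμd : ∀ y, q y = μ y + d y := by
      intro y; rcases le_total (p y) (q y) with h|h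
      · simp [hd, hμ, min_eq_left h, max_eq_left (by linarith : 0 ≤ q y - p y)]
      · simp [hd, hμ, min_eq_right h, max_eq_right (by linarith : q y - p y ≤ 0)]
    have hcd_abs : ∀ y, c y + d y = |p y - q y| := by
      intro y; rcases le_total (p y) (q y) with h|h
      · rw [abs_of_nonpos (by linarith : p y - q y ≤ 0)]
        simp [hc, hd, max_eq_right (by linarith : p y - q y ≤ 0),
          max_eq_left (by linarith : 0 ≤ q y - p y)]
      · rw [abs_of_nonneg (by linarith : 0 ≤ p y - q y)]
        simp [hc, hd, max_eq_left (by linarith : 0 ≤ p y - q y),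
          max_eq_right (by linarith : q y - p y ≤ 0)]
    have hsumc : ∑ y : Y, c y = σ := by
      have h1 : ∑ y : Y, (c y + d y) = 2 * σ := by
        rw [hσdef]
        rw [Finset.sum_congr rfl (fun y _ => hcd_abs y)]
        ring
      have h2 : ∑ y : Y, (c y - d y) = 0 := by
        have : ∀ y, c y - d y = p y - q y := by
          intro y; have := hpμc y; have := hqμd y; linarith
        rw [Finset.sum_congr rfl (fun y _ => this y), Finset.sum_sub_distrib, hp1, hq1]
        ring
      rw [Finset.sum_add_distrib] at h1
      rw [Finset.sum_sub_distrib] at h2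
      linarith
    have hsumd : ∑ y : Y, d y = σ := by
      have h1 : ∑ y : Y, (c y + d y) = 2 * σ := by
        rw [Finset.sum_congr rfl (fun y _ => hcd_abs y)]
        rw [hσdef]; ring
      rw [Finset.sum_add_distrib, hsumc] at h1
      linarith
    have hsumμ : ∑ y : Y, μ y = 1 - σ := by
      have : ∑ y : Y, (μ y + c y) = 1 := by
        rw [← Finset.sum_congr rfl (fun y _ => hpμc y), hp1]
      rw [Finset.sum_add_distrib, hsumc] at this
      linarith
    have hdleσ : ∀ y, d y ≤ σ := by
      intro y
      rw [← hsumd]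
      exact Finset.single_le_sum (fun y _ => hd0 y) (Finset.mem_univ y)
    -- Step 1 : Ση(p) ≤ Ση(μ) + Ση(c)
    have step1 : ∑ y : Y, Real.negMulLog (p y) ≤
        ∑ y : Y, Real.negMulLog (μ y) + ∑ y : Y, Real.negMulLog (c y) := by
      rw [← Finset.sum_add_distrib]
      apply Finset.sum_le_sum
      intro y _
      rw [hpμc y]
      exact eta_subadd (hμ0 y) (hc0 y)
    -- Step 2 : Ση(μ) + (1-σ) log(1-σ) ≤ Ση(q)
    have step2 : ∑ y : Y, Real.negMulLog (μ y) + (1-σ) * Real.log (1-σ) ≤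
        ∑ y : Y, Real.negMulLog (q y) := by
      have : ∀ y, Real.negMulLog (μ y) + μ y * Real.log (1-σ) ≤ Real.negMulLog (q y) := by
        intro y
        rw [hqμd y]
        exact eta_add_ge (hμ0 y) (hd0 y) (hdleσ y) hσpos hσ1
      calc ∑ y : Y, Real.negMulLog (μ y) + (1-σ) * Real.log (1-σ)
          = ∑ y : Y, (Real.negMulLog (μ y) + μ y * Real.log (1-σ)) := by
            rw [Finset.sum_add_distrib, ← Finset.sum_mul, hsumμ]
        _ ≤ ∑ y : Y, Real.negMulLog (q y) := Finset.sum_le_sum (fun y _ => this y)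
    -- Step 3 : Ση(c) ≤ σ log(m-1) + η(σ)
    have step3 : ∑ y : Y, Real.negMulLog (c y) ≤
        σ * Real.log ((Fintype.card Y : ℝ) - 1) + Real.negMulLog σ := by
      -- find y0 with d y0 > 0
      have hy0 : ∃ y0 : Y, 0 < d y0 := by
        by_contra h
        push_neg at h
        have : ∑ y : Y, d y ≤ 0 := Finset.sum_nonpos (fun y _ => h y)
        rw [hsumd] at this
        linarith
      obtain ⟨y0, hy0⟩ := hy0
      have hqp : 0 < q y0 - p y0 := by
        rcases lt_or_ge (p y0) (q y0) with h|h
        · linarith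
        · exfalso
          have : d y0 = 0 := by
            simp only [hd]
            exact max_eq_right (by linarith)
          rw [this] at hy0
          exact lt_irrefl 0 hy0
      have hcy0 : c y0 = 0 := by
        simp only [hc]
        exact max_eq_right (by linarith)
      set t : Y → ℝ := fun y => c y / σ with ht
      have hct : ∀ y, c y = σ * t y := by
        intro y; simp only [ht]; field_simp
      have hsumt : ∑ y ∈ Finset.univ.erase y0, t y = 1 := by
        rw [Finset.sum_erase _ (by simp only [ht]; rw [hcy0]; simp)]
        simp only [ht]
        rw [← Finset.sum_div, hsumc]
        field_simp
      have hgibbs := gibbs_sum (Finset.univ.erase y0) t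
        (fun y _ => div_nonneg (hc0 y) hσ0) hsumt
      have hcard : ((Finset.univ.erase y0).card : ℝ) = (Fintype.card Y : ℝ) - 1 := by
        rw [Finset.card_erase_of_mem (Finset.mem_univ y0), Finset.card_univ]
        have h1 : 1 ≤ Fintype.card Y := by omega
        push_cast [Nat.cast_sub h1]
        ring
      rw [hcard] at hgibbs
      have hsum_eta_t : ∑ y : Y, Real.negMulLog (t y) ≤
          Real.log ((Fintype.card Y : ℝ) - 1) := by
        rw [← Finset.sum_erase _ (by rw [show t y0 = 0 by simp only [ht]; rw [hcy0]; simp]; exact Real.negMulLog_zero)]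
        exact hgibbs
      calc ∑ y : Y, Real.negMulLog (c y)
          = ∑ y : Y, (t y * Real.negMulLog σ + σ * Real.negMulLog (t y)) := by
            apply Finset.sum_congr rfl
            intro y _
            rw [hct y, Real.negMulLog_mul]
        _ = Real.negMulLog σ + σ * ∑ y : Y, Real.negMulLog (t y) := by
            rw [Finset.sum_add_distrib, ← Finset.sum_mul, ← Finset.mul_sum]
            have : ∑ y : Y, t y = 1 := by
              simp only [ht]
              rw [← Finset.sum_div, hsumc]
              field_simp
            rw [this, one_mul]
        _ ≤ σ * Real.log ((Fintype.card Y : ℝ) - 1) + Real.negMulLog σ := by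
            nlinarith [mul_le_mul_of_nonneg_left hsum_eta_t hσ0 ]
    -- combine
    have hη1σ : -(1-σ) * Real.log (1-σ) ≤ σ := by
      have := eta_one_sub hσ0 hσ1
      rw [Real.negMulLog] at this
      linarith
    have main : ∑ y : Y, Real.negMulLog (p y) - ∑ y : Y, Real.negMulLog (q y) ≤
        σ * Real.log ((Fintype.card Y : ℝ) - 1) + Real.negMulLog σ + σ := by
      linarith [step1, step2, step3, hη1σ]
    -- monotonicity in σ
    have tangent := eta_tangent hσ0 hspos
    have hlogs : Real.log s ≤ 0 := Real.log_nonpos hspos.le (by linarith)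
    have key : 0 ≤ (s - σ) * (Real.log ((Fintype.card Y : ℝ) - 1) - Real.log s) :=
      mul_nonneg (by linarith) (by linarith)
    linarith [main, tangent, key]

end helpers

open Real Finset

/-- Continuity of mutual information in the input distribution. -/
theorem mutual_info_continuity {X Y : Type*} [Fintype X] [Fintype Y]
    (W : X → Y → ℝ) (hW0 : ∀ x y, 0 ≤ W x y) (hW1 : ∀ x, ∑ y : Y, W x y = 1)
    (P T : X → ℝ) (hP0 : ∀ x, 0 ≤ P x) (hP1 : ∑ x : X, P x = 1)
    (hT0 : ∀ x, 0 ≤ T x) (hT1 : ∑ x : X, T x = 1)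
    (ν : ℝ) (hν : 0 ≤ ν)
    (hd : (1 / 2) * ∑ x : X, |P x - T x| ≤ Real.sqrt (ν / 2))
    (hhalf : Real.sqrt (ν / 2) ≤ 1 / 2)
    (I : (X → ℝ) → ℝ)
    (hI : ∀ Q : X → ℝ, I Q =
      (- ∑ y : Y, (∑ x : X, Q x * W x y) * Real.log (∑ x : X, Q x * W x y)) -
        ∑ x : X, Q x * (- ∑ y : Y, W x y * Real.log (W x y))) :
    |I T - I P| ≤
      (3 * Real.sqrt (2 * ν) / 2) * Real.log (Fintype.card Y) -
        Real.sqrt (ν / 2) * Real.log (Real.sqrt (ν / 2)) := by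
  set s : ℝ := Real.sqrt (ν / 2) with hsdef
  have hs0 : 0 ≤ s := Real.sqrt_nonneg _
  have hsqrt : Real.sqrt (2 * ν) = 2 * s := by
    rw [hsdef, show (2*ν) = 2^2 * (ν/2) by ring, Real.sqrt_mul (by positivity),
      Real.sqrt_sq (by norm_num)]
  rcases Nat.lt_or_ge (Fintype.card Y) 2 with hY|hY
  · -- |Y| ≤ 1
    interval_cases hcard : Fintype.card Y
    · -- |Y| = 0 : contradiction
      exfalso
      have hXne : Nonempty X := by
        by_contra h
        rw [not_nonempty_iff] at h
        rw [Finset.univ_eq_empty, Finset.sum_empty] at hP1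
        exact one_ne_zero hP1.symm
      obtain ⟨x⟩ := hXne
      have hYe : IsEmpty Y := Fintype.card_eq_zero_iff.mp hcard
      have := hW1 x
      rw [Finset.univ_eq_empty, Finset.sum_empty] at this
      exact one_ne_zero this.symm
    · -- |Y| = 1
      obtain ⟨y0, hy0⟩ := Fintype.card_eq_one_iff.mp hcard
      have huniv : (Finset.univ : Finset Y) = {y0} :=
        Finset.eq_singleton_iff_unique_mem.mpr ⟨Finset.mem_univ y0, fun y _ => hy0 y⟩
      have hW : ∀ x y, W x y = 1 := by
        intro x y
        have h1 := hW1 x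
        rw [huniv, Finset.sum_singleton] at h1
        rw [hy0 y, h1]
      have hIT : I T = 0 := by
        rw [hI T]
        simp [hW, mul_one, hT1, Real.log_one]
      have hIP : I P = 0 := by
        rw [hI P]
        simp [hW, mul_one, hP1, Real.log_one]
      rw [hIT, hIP]
      have hηs : 0 ≤ Real.negMulLog s := Real.negMulLog_nonneg hs0 (by linarith)
      rw [Real.negMulLog] at hηs
      simp only [sub_self, abs_zero, Nat.cast_one, Real.log_one, mul_zero, zero_sub]
      linarith
  · -- |Y| ≥ 2
    have hmR : (2:ℝ) ≤ (Fintype.card Y : ℝ) := by exact_mod_cast hY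
    have hlogm : 0 ≤ Real.log (Fintype.card Y : ℝ) := Real.log_nonneg (by linarith)
    set m : ℝ := (Fintype.card Y : ℝ) with hmdef
    -- output distributions
    set p : Y → ℝ := fun y => ∑ x : X, P x * W x y with hp
    set q : Y → ℝ := fun y => ∑ x : X, T x * W x y with hq
    have hp0 : ∀ y, 0 ≤ p y := fun y =>
      Finset.sum_nonneg (fun x _ => mul_nonneg (hP0 x) (hW0 x y))
    have hq0 : ∀ y, 0 ≤ q y := fun y =>
      Finset.sum_nonneg (fun x _ => mul_nonneg (hT0 x) (hW0 x y))
    have hp1 : ∑ y : Y, p y = 1 := by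
      rw [hp]
      rw [Finset.sum_comm]
      calc ∑ x : X, ∑ y : Y, P x * W x y = ∑ x : X, P x * ∑ y : Y, W x y := by
            apply Finset.sum_congr rfl; intro x _; rw [Finset.mul_sum]
        _ = 1 := by
            rw [Finset.sum_congr rfl (fun x _ => by rw [hW1 x, mul_one])]
            exact hP1
    have hq1 : ∑ y : Y, q y = 1 := by
      rw [hq]
      rw [Finset.sum_comm]
      calc ∑ x : X, ∑ y : Y, T x * W x y = ∑ x : X, T x * ∑ y : Y, W x y := by
            apply Finset.sum_congr rfl; intro x _; rw [Finset.mul_sum]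
        _ = 1 := by
            rw [Finset.sum_congr rfl (fun x _ => by rw [hW1 x, mul_one])]
            exact hT1
    -- data processing
    have hdp : (1/2) * ∑ y : Y, |p y - q y| ≤ s := by
      have h1 : ∑ y : Y, |p y - q y| ≤ ∑ x : X, |P x - T x| := by
        calc ∑ y : Y, |p y - q y|
            ≤ ∑ y : Y, ∑ x : X, |P x - T x| * W x y := by
              apply Finset.sum_le_sum
              intro y _
              have : p y - q y = ∑ x : X, (P x - T x) * W x y := by
                rw [hp, hq, ← Finset.sum_sub_distrib]
                apply Finset.sum_congr rfl; intro x _; ring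
              rw [this]
              calc |∑ x : X, (P x - T x) * W x y| ≤ ∑ x : X, |(P x - T x) * W x y| :=
                    Finset.abs_sum_le_sum_abs _ _
                _ = ∑ x : X, |P x - T x| * W x y := by
                    apply Finset.sum_congr rfl; intro x _
                    rw [abs_mul, abs_of_nonneg (hW0 x y)]
          _ = ∑ x : X, |P x - T x| := by
              rw [Finset.sum_comm]
              apply Finset.sum_congr rfl
              intro x _
              rw [← Finset.mul_sum, hW1 x, mul_one]
      linarith [hd]
    -- entropy difference of outputs
    have hA1 := ent_diff q p hq0 hq1 hp0 hp1 hY s (by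
      rw [show ∑ y : Y, |q y - p y| = ∑ y : Y, |p y - q y| from
        Finset.sum_congr rfl (fun y _ => abs_sub_comm _ _)]
      exact hdp) hhalf
    have hA2 := ent_diff p q hp0 hp1 hq0 hq1 hY s hdp hhalf
    -- conditional entropies
    obtain ⟨h, hh⟩ : ∃ h : X → ℝ, ∀ x, h x = - ∑ y : Y, W x y * Real.log (W x y) :=
      ⟨_, fun _ => rfl⟩
    have hheta : ∀ x, h x = ∑ y : Y, Real.negMulLog (W x y) := by
      intro x
      rw [hh x]
      rw [← Finset.sum_neg_distrib]
      apply Finset.sum_congr rfl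
      intro y _
      rw [Real.negMulLog]
      ring
    have hW1' : ∀ x y, W x y ≤ 1 := by
      intro x y
      calc W x y ≤ ∑ y' : Y, W x y' :=
            Finset.single_le_sum (fun y' _ => hW0 x y') (Finset.mem_univ y)
        _ = 1 := hW1 x
    have hh0 : ∀ x, 0 ≤ h x := by
      intro x
      rw [hheta x]
      exact Finset.sum_nonneg (fun y _ => Real.negMulLog_nonneg (hW0 x y) (hW1' x y))
    have hhm : ∀ x, h x ≤ Real.log m := by
      intro x
      rw [hheta x]
      have := gibbs_sum Finset.univ (W x) (fun y _ => hW0 x y) (hW1 x)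
      rwa [Finset.card_univ] at this
    -- bound on conditional entropy difference
    have hB : |∑ x : X, T x * h x - ∑ x : X, P x * h x| ≤ s * Real.log m := by
      have hcenter : ∑ x : X, T x * h x - ∑ x : X, P x * h x
          = ∑ x : X, (T x - P x) * (h x - Real.log m / 2) := by
        rw [Finset.sum_congr rfl (fun x (_ : x ∈ Finset.univ) =>
          show (T x - P x) * (h x - Real.log m / 2)
            = T x * h x - P x * h x - (T x - P x) * (Real.log m / 2) by ring)]
        rw [Finset.sum_sub_distrib, Finset.sum_sub_distrib, ← Finset.sum_mul,
          Finset.sum_sub_distrib, hT1, hP1]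
        ring
      rw [hcenter]
      calc |∑ x : X, (T x - P x) * (h x - Real.log m / 2)|
          ≤ ∑ x : X, |(T x - P x) * (h x - Real.log m / 2)| := Finset.abs_sum_le_sum_abs _ _
        _ ≤ ∑ x : X, |T x - P x| * (Real.log m / 2) := by
            apply Finset.sum_le_sum
            intro x _
            rw [abs_mul]
            apply mul_le_mul_of_nonneg_left _ (abs_nonneg _)
            rw [abs_le]
            constructor
            · linarith [hhm x, hh0 x]
            · linarith [hhm x, hh0 x]
        _ = (∑ x : X, |T x - P x|) * (Real.log m / 2) := by rw [Finset.sum_mul]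
        _ ≤ (2 * s) * (Real.log m / 2) := by
            apply mul_le_mul_of_nonneg_right _ (by linarith)
            have : ∑ x : X, |T x - P x| = ∑ x : X, |P x - T x| :=
              Finset.sum_congr rfl (fun x _ => abs_sub_comm _ _)
            rw [this]
            linarith [hd]
        _ = s * Real.log m := by ring
    -- identify I with the pieces
    have hIT : I T = ∑ y : Y, Real.negMulLog (q y) - ∑ x : X, T x * h x := by
      rw [hI T]
      rw [Finset.sum_congr rfl (fun x (_ : x ∈ Finset.univ) => by rw [hh x] :
        ∀ x ∈ Finset.univ, T x * h x = T x * (- ∑ y : Y, W x y * Real.log (W x y)))]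
      congr 1
      rw [← Finset.sum_neg_distrib]
      apply Finset.sum_congr rfl
      intro y _
      rw [Real.negMulLog, hq]
      ring
    have hIP : I P = ∑ y : Y, Real.negMulLog (p y) - ∑ x : X, P x * h x := by
      rw [hI P]
      rw [Finset.sum_congr rfl (fun x (_ : x ∈ Finset.univ) => by rw [hh x] :
        ∀ x ∈ Finset.univ, P x * h x = P x * (- ∑ y : Y, W x y * Real.log (W x y)))]
      congr 1
      rw [← Finset.sum_neg_distrib]
      apply Finset.sum_congr rfl
      intro y _
      rw [Real.negMulLog, hp]
      ring
    -- final numeric assembly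
    have hlog4 : Real.log ((m-1)) + 1 ≤ 2 * Real.log m := by
      have h4 : (m - 1) ≤ m^2 / 4 := by nlinarith
      have hm1pos : (0:ℝ) < m - 1 := by linarith
      have h5 : Real.log (m-1) ≤ Real.log (m^2/4) := Real.log_le_log hm1pos h4
      have h6 : Real.log (m^2/4) = 2 * Real.log m - 2 * Real.log 2 := by
        rw [Real.log_div (by positivity) (by norm_num),
          Real.log_pow, show (4:ℝ) = 2^2 by norm_num, Real.log_pow]
        push_cast
        ring
      have h7 : (0.6931471803 : ℝ) < Real.log 2 := Real.log_two_gt_d9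
      linarith
    have habs : |I T - I P| ≤
        (s * Real.log (m - 1) + Real.negMulLog s + s) + s * Real.log m := by
      rw [hIT, hIP]
      have h1 : |(∑ y : Y, Real.negMulLog (q y)) - ∑ y : Y, Real.negMulLog (p y)| ≤
          s * Real.log (m - 1) + Real.negMulLog s + s := by
        rw [abs_le]
        exact ⟨by linarith [hA2, hs0, Real.negMulLog_nonneg hs0 (by linarith : s ≤ 1),
          mul_nonneg hs0 (Real.log_nonneg (by linarith : (1:ℝ) ≤ m - 1))], hA1⟩
      calc |(∑ y : Y, Real.negMulLog (q y) - ∑ x : X, T x * h x) -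
            (∑ y : Y, Real.negMulLog (p y) - ∑ x : X, P x * h x)|
          ≤ |(∑ y : Y, Real.negMulLog (q y)) - ∑ y : Y, Real.negMulLog (p y)| +
            |∑ x : X, T x * h x - ∑ x : X, P x * h x| := by
            rw [show (∑ y : Y, Real.negMulLog (q y) - ∑ x : X, T x * h x) -
                (∑ y : Y, Real.negMulLog (p y) - ∑ x : X, P x * h x) =
                ((∑ y : Y, Real.negMulLog (q y)) - ∑ y : Y, Real.negMulLog (p y)) +
                -(∑ x : X, T x * h x - ∑ x : X, P x * h x) by ring]
            refine (abs_add_le _ _).trans (le_of_eq ?_)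
            rw [abs_neg]
        _ ≤ (s * Real.log (m - 1) + Real.negMulLog s + s) + s * Real.log m :=
            add_le_add h1 hB
    rw [hsqrt]
    have hηs : Real.negMulLog s = -(s * Real.log s) := by rw [Real.negMulLog]; ring
    have hfin : s * Real.log (m-1) + s ≤ 2 * s * Real.log m := by
      nlinarith [mul_le_mul_of_nonneg_left hlog4 hs0]
    rw [hηs] at habs
    have : (3 * (2*s) / 2) * Real.log m = 3 * s * Real.log m := by ring
    rw [this]
    linarith [habs]
end

section
/- Let Y be a finite set, ε ∈ (0,1/2], L a positive integer, m : {1,...,L} × Y → [0,1], and define w(l,y) = exp(-ε·Σ_{l'<l} m(l',y)) and f(l,y) = w(l,y)/Σ_{y'} w(l,y'). Then Σ_y w(L+1,y) ≤ |Y| · exp(-(1-e^{-ε})·Σ_{l=1}^L Σ_y f(l,y)·m(l,y)). -/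
open Finset in
/-- Potential-function upper bound in the analysis of the Hedge algorithm. -/
theorem mwu_potential_bound {Y : Type*} [Fintype Y] [Nonempty Y]
    (ε : ℝ) (hε0 : 0 < ε) (hε1 : ε ≤ 1/2)
    (L : ℕ) (hL : 0 < L)
    (m : Fin L → Y → ℝ) (hm0 : ∀ l y, 0 ≤ m l y) (hm1 : ∀ l y, m l y ≤ 1)
    (w : ℕ → Y → ℝ)
    (hw : ∀ l : ℕ, ∀ y, w l y =
      Real.exp (-ε * ∑ l' ∈ univ.filter (fun l' : Fin L => (l' : ℕ) + 1 < l), m l' y))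
    (f : Fin L → Y → ℝ)
    (hf : ∀ l y, f l y = w ((l : ℕ) + 1) y / ∑ y' : Y, w ((l : ℕ) + 1) y') :
    ∑ y : Y, w (L + 1) y ≤
      (Fintype.card Y : ℝ) *
        Real.exp (-(1 - Real.exp (-ε)) *
          ∑ l : Fin L, ∑ y : Y, f l y * m l y) := by
  set c : ℝ := 1 - Real.exp (-ε) with hc
  have hexp : ∀ x : ℝ, 0 ≤ x → x ≤ 1 → Real.exp (-ε * x) ≤ 1 - c * x := by
    intro x hx0 hx1
    have h := convexOn_exp.2 (Set.mem_univ (0:ℝ)) (Set.mem_univ (-ε))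
      (by linarith : (0:ℝ) ≤ 1 - x) hx0 (by ring)
    simp only [smul_eq_mul, mul_zero, zero_add, Real.exp_zero, mul_neg] at h
    rw [show -ε * x = -(x*ε) by ring, hc]
    linarith
  have hwpos : ∀ l y, 0 < w l y := fun l y => by rw [hw]; exact Real.exp_pos _
  have hWpos : ∀ l : ℕ, 0 < ∑ y : Y, w l y :=
    fun l => Finset.sum_pos (fun y _ => hwpos l y) Finset.univ_nonempty
  have key : ∀ k : ℕ, k ≤ L →
      ∑ y : Y, w (k + 1) y ≤
        (Fintype.card Y : ℝ) *
          Real.exp (-c * ∑ l ∈ univ.filter (fun l : Fin L => (l : ℕ) < k),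
            ∑ y : Y, f l y * m l y) := by
    intro k hk
    induction k with
    | zero =>
      have : ∀ y : Y, w 1 y = 1 := by
        intro y
        rw [hw]
        have : univ.filter (fun l' : Fin L => (l' : ℕ) + 1 < 1) = ∅ := by
          ext l'; simp
        simp [this]
      simp [this]
    | succ k ih =>
      have hkL : k < L := hk
      have ih' := ih (le_of_lt hkL)
      set lk : Fin L := ⟨k, hkL⟩ with hlk
      have hstep : ∀ y, w (k + 2) y = w (k + 1) y * Real.exp (-ε * m lk y) := by
        intro y
        rw [hw, hw, ← Real.exp_add]
        congr 1
        have hins : univ.filter (fun l' : Fin L => (l' : ℕ) + 1 < k + 2)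
            = insert lk (univ.filter (fun l' : Fin L => (l' : ℕ) + 1 < k + 1)) := by
          ext l'
          simp only [Finset.mem_filter, Finset.mem_univ, true_and, Finset.mem_insert,
            hlk, Fin.ext_iff]
          omega
        rw [hins, Finset.sum_insert (by simp [hlk])]
        ring
      have hW : (∑ y : Y, w (k+1) y) ≠ 0 := (hWpos _).ne'
      have hptwise : ∑ y : Y, f lk y * m lk y
          = (∑ y : Y, w (k+1) y * m lk y) / (∑ y : Y, w (k+1) y) := by
        rw [Finset.sum_div]
        exact Finset.sum_congr rfl fun y _ => by rw [hf]; ring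
      have hfin : ∑ y : Y, w (k + 1 + 1) y ≤
          (Fintype.card Y : ℝ) *
            Real.exp (-c * ∑ l ∈ univ.filter (fun l : Fin L => (l : ℕ) < k + 1),
              ∑ y : Y, f l y * m l y) := by
        calc ∑ y : Y, w (k + 2) y
            = ∑ y : Y, w (k+1) y * Real.exp (-ε * m lk y) := by
              exact Finset.sum_congr rfl fun y _ => hstep y
          _ ≤ ∑ y : Y, w (k+1) y * (1 - c * m lk y) :=
              Finset.sum_le_sum fun y _ =>
                mul_le_mul_of_nonneg_left (hexp _ (hm0 _ _) (hm1 _ _)) (hwpos _ _).le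
          _ = (∑ y : Y, w (k+1) y) * (1 - c * ∑ y : Y, f lk y * m lk y) := by
              have e1 : ∑ y : Y, w (k+1) y * (1 - c * m lk y)
                  = (∑ y : Y, w (k+1) y) - c * (∑ y : Y, w (k+1) y * m lk y) := by
                rw [Finset.mul_sum, ← Finset.sum_sub_distrib]
                exact Finset.sum_congr rfl fun y _ => by ring
              rw [e1, hptwise]
              field_simp
          _ ≤ (∑ y : Y, w (k+1) y) *
                Real.exp (-(c * ∑ y : Y, f lk y * m lk y)) := by
              apply mul_le_mul_of_nonneg_left _ (hWpos _).le
              have := Real.add_one_le_exp (-(c * ∑ y : Y, f lk y * m lk y))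
              linarith
          _ ≤ ((Fintype.card Y : ℝ) *
                Real.exp (-c * ∑ l ∈ univ.filter (fun l : Fin L => (l : ℕ) < k),
                  ∑ y : Y, f l y * m l y)) *
                Real.exp (-(c * ∑ y : Y, f lk y * m lk y)) :=
              mul_le_mul_of_nonneg_right ih' (Real.exp_pos _).le
          _ = (Fintype.card Y : ℝ) *
                Real.exp (-c * ∑ l ∈ univ.filter (fun l : Fin L => (l : ℕ) < k + 1),
                  ∑ y : Y, f l y * m l y) := by
              rw [mul_assoc, ← Real.exp_add]
              congr 2
              have hins : univ.filter (fun l : Fin L => (l : ℕ) < k + 1)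
                  = insert lk (univ.filter (fun l : Fin L => (l : ℕ) < k)) := by
                ext l
                simp only [Finset.mem_filter, Finset.mem_univ, true_and, Finset.mem_insert,
                  hlk, Fin.ext_iff]
                omega
              rw [hins, Finset.sum_insert (by simp [hlk])]
              ring
      exact hfin
  have hfinal := key L le_rfl
  have huniv : univ.filter (fun l : Fin L => (l : ℕ) < L) = univ := by
    ext l; simp [l.is_lt]
  rw [huniv] at hfinal
  exact hfinal
end

section
/- Let X, Y be finite sets, P a distribution on X, W a channel, S ⊆ X × Y, ε ∈ (0,1/2], and suppose L ≥ e^{D_max}·ln|Y|/ε², where D_max is defined as above. Then the codebook C = {x_1,...,x_L} produced by running the Hedge MWU algorithm over the support s(W_P^S) with cost m(x,y) = (W_x^S(y)/W_P^S(y))e^{-D_max}, where at each round l the X-player picks x_l maximizing the f(l,·)-expected cost, satisfies d_var(W_P, W_C) ≤ 2ε + Σ_{(x,y)∈S^c} P(x)·W_x(y), where W_C(y) = (1/L)Σ_l W_{x_l}(y). -/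
set_option maxHeartbeats 1000000 in
open Finset Classical in
/-- Single-shot channel resolvability via the multiplicative weight update
algorithm with the greedy X-player. -/
theorem singleshot_channel_resolvability_mwu {X Y : Type*} [Fintype X] [Fintype Y]
    [Nonempty X]
    (P : X → ℝ) (hP0 : ∀ x, 0 ≤ P x) (hP1 : ∑ x : X, P x = 1)
    (W : X → Y → ℝ) (hW0 : ∀ x y, 0 ≤ W x y) (hW1 : ∀ x, ∑ y : Y, W x y = 1)
    (S : Finset (X × Y))
    (WxS : X → Y → ℝ) (hWxS : ∀ x y, WxS x y = if (x, y) ∈ S then W x y else 0)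
    (WPS : Y → ℝ) (hWPS : ∀ y, WPS y = ∑ x : X, P x * WxS x y)
    (Dmax : ℝ)
    (hD : IsGreatest {r : ℝ | ∃ x y, (x, y) ∈ S ∧ 0 < WPS y ∧
            r = Real.log (WxS x y / WPS y)} Dmax)
    (m : X → Y → ℝ) (hm : ∀ x y, m x y = WxS x y / WPS y * Real.exp (-Dmax))
    (ε : ℝ) (hε0 : 0 < ε) (hε1 : ε ≤ 1/2)
    (L : ℕ) (hLpos : 0 < L)
    (hL : (L : ℝ) ≥ Real.exp Dmax * Real.log (Fintype.card Y) / ε ^ 2)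
    (xl : Fin L → X)
    (w : Fin L → Y → ℝ)
    (hw : ∀ l y, w l y =
      Real.exp (-ε * ∑ l' ∈ univ.filter (fun l' : Fin L => l' < l), m (xl l') y))
    (f : Fin L → Y → ℝ)
    (hf : ∀ l y, f l y =
      w l y / ∑ y' ∈ univ.filter (fun y' => 0 < WPS y'), w l y')
    (hgreedy : ∀ l : Fin L, ∀ x : X,
      ∑ y ∈ univ.filter (fun y => 0 < WPS y), f l y * m x y ≤
        ∑ y ∈ univ.filter (fun y => 0 < WPS y), f l y * m (xl l) y)
    (WP : Y → ℝ) (hWP : ∀ y, WP y = ∑ x : X, P x * W x y)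
    (WC : Y → ℝ) (hWC : ∀ y, WC y = (1 / (L : ℝ)) * ∑ l : Fin L, W (xl l) y) :
    (1 / 2) * ∑ y : Y, |WP y - WC y| ≤
      2 * ε + ∑ p ∈ Sᶜ, P p.1 * W p.1 p.2 := by
  classical
  -- basic positivity facts
  have hWxS0 : ∀ x y, 0 ≤ WxS x y := by
    intro x y; rw [hWxS]; split
    · exact hW0 x y
    · exact le_rfl
  have hWxSW : ∀ x y, WxS x y ≤ W x y := by
    intro x y; rw [hWxS]; split
    · exact le_rfl
    · exact hW0 x y
  have hWPS0 : ∀ y, 0 ≤ WPS y := by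
    intro y; rw [hWPS]
    exact Finset.sum_nonneg fun x _ => mul_nonneg (hP0 x) (hWxS0 x y)
  have hm0 : ∀ x y, 0 ≤ m x y := by
    intro x y; rw [hm]
    exact mul_nonneg (div_nonneg (hWxS0 x y) (hWPS0 y)) (Real.exp_pos _).le
  have hratio : ∀ x y, 0 < WPS y → WxS x y / WPS y ≤ Real.exp Dmax := by
    intro x y hy
    rcases eq_or_lt_of_le (hWxS0 x y) with h0 | h0
    · rw [← h0, zero_div]; exact (Real.exp_pos _).le
    · have hxyS : (x, y) ∈ S := by
        by_contra h; rw [hWxS, if_neg h] at h0; exact lt_irrefl 0 h0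
      have hmem : Real.log (WxS x y / WPS y) ≤ Dmax := hD.2 ⟨x, y, hxyS, hy, rfl⟩
      have hpos : 0 < WxS x y / WPS y := div_pos h0 hy
      calc WxS x y / WPS y = Real.exp (Real.log (WxS x y / WPS y)) :=
            (Real.exp_log hpos).symm
        _ ≤ Real.exp Dmax := Real.exp_le_exp.2 hmem
  have hm1 : ∀ x y, 0 < WPS y → m x y ≤ 1 := by
    intro x y hy; rw [hm]
    calc WxS x y / WPS y * Real.exp (-Dmax)
        ≤ Real.exp Dmax * Real.exp (-Dmax) :=
          mul_le_mul_of_nonneg_right (hratio x y hy) (Real.exp_pos _).le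
      _ = 1 := by rw [← Real.exp_add]; simp
  set T : Finset Y := univ.filter (fun y => 0 < WPS y) with hTdef
  have hTmem : ∀ y, y ∈ T ↔ 0 < WPS y := by intro y; simp [hTdef]
  obtain ⟨x0, y0, hS0, hy0, -⟩ := hD.1
  have hTne : T.Nonempty := ⟨y0, (hTmem y0).2 hy0⟩
  have hTcard : 0 < T.card := Finset.card_pos.2 hTne
  have hmP : ∀ y, 0 < WPS y → ∑ x : X, P x * m x y = Real.exp (-Dmax) := by
    intro y hy
    have h1 : ∑ x : X, P x * m x y
        = (∑ x : X, P x * WxS x y) / WPS y * Real.exp (-Dmax) := by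
      rw [Finset.sum_div, Finset.sum_mul]
      exact Finset.sum_congr rfl fun x _ => by rw [hm]; ring
    rw [h1, ← hWPS y, div_self hy.ne', one_mul]
  -- reindexing of costs over ℕ
  set c : ℕ → Y → ℝ := fun n y => if h : n < L then m (xl ⟨n, h⟩) y else 0 with hcdef
  have hc0 : ∀ n y, 0 ≤ c n y := by
    intro n y; simp only [hcdef]; split
    · exact hm0 _ _
    · exact le_rfl
  have hc1 : ∀ n y, 0 < WPS y → c n y ≤ 1 := by
    intro n y hy; simp only [hcdef]; split
    · exact hm1 _ _ hy
    · exact zero_le_one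
  set A : ℕ → Y → ℝ := fun n y => ∑ i ∈ Finset.range n, c i y with hAdef
  set Φ : ℕ → ℝ := fun n => ∑ y ∈ T, Real.exp (-ε * A n y) with hΦdef
  have hΦpos : ∀ n, 0 < Φ n := fun n =>
    Finset.sum_pos (fun y _ => Real.exp_pos _) hTne
  -- link w with A
  have hsum_eq : ∀ (l : Fin L) y,
      ∑ l' ∈ univ.filter (fun l' : Fin L => l' < l), m (xl l') y = A (l : ℕ) y := by
    intro l y
    have h1 : ∑ l' ∈ univ.filter (fun l' : Fin L => l' < l), m (xl l') y
        = ∑ l' : Fin L, if ((l' : ℕ) < (l : ℕ)) then c (l' : ℕ) y else 0 := by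
      rw [Finset.sum_filter]
      refine Finset.sum_congr rfl fun l' _ => ?_
      by_cases h : l' < l
      · rw [if_pos h, if_pos (Fin.lt_def.1 h)]
        simp only [hcdef]
        rw [dif_pos l'.isLt]
      · rw [if_neg h, if_neg (fun hh => h (Fin.lt_def.2 hh))]
    rw [h1, Fin.sum_univ_eq_sum_range (fun i => if i < (l : ℕ) then c i y else 0) L,
      ← Finset.sum_subset (Finset.range_subset_range.2 l.isLt.le)
        (fun i _ hi => if_neg (fun h => hi (Finset.mem_range.2 h)))]
    exact Finset.sum_congr rfl fun i hi => if_pos (Finset.mem_range.1 hi)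
  have hwA : ∀ (l : Fin L) y, w l y = Real.exp (-ε * A (l : ℕ) y) := by
    intro l y; rw [hw, hsum_eq]
  -- greedy bound in weight form
  have hgw : ∀ (n : ℕ) (hn : n < L),
      Φ n * Real.exp (-Dmax) ≤ ∑ y ∈ T, Real.exp (-ε * A n y) * c n y := by
    intro n hn
    have hcn : ∀ y, c n y = m (xl ⟨n, hn⟩) y := by
      intro y; simp only [hcdef]; rw [dif_pos hn]
    set l : Fin L := ⟨n, hn⟩ with hldef
    have hZpos : 0 < ∑ y' ∈ T, w l y' := by
      refine Finset.sum_pos (fun y _ => ?_) hTne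
      rw [hwA]; exact Real.exp_pos _
    have e1 : ∀ g : X, ∑ y ∈ T, f l y * m g y
        = (∑ y ∈ T, Real.exp (-ε * A n y) * m g y) / (∑ y' ∈ T, w l y') := by
      intro g; rw [Finset.sum_div]
      refine Finset.sum_congr rfl fun y _ => ?_
      rw [hf, hwA]; ring
    have hg : ∀ x : X, ∑ y ∈ T, Real.exp (-ε * A n y) * m x y
        ≤ ∑ y ∈ T, Real.exp (-ε * A n y) * m (xl l) y := by
      intro x
      have h := hgreedy l x
      rw [e1, e1] at h
      have h2 := mul_le_mul_of_nonneg_right h hZpos.le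
      rwa [div_mul_cancel₀ _ hZpos.ne', div_mul_cancel₀ _ hZpos.ne'] at h2
    have havg : ∑ x : X, P x * ∑ y ∈ T, Real.exp (-ε * A n y) * m x y
        = Φ n * Real.exp (-Dmax) := by
      calc ∑ x : X, P x * ∑ y ∈ T, Real.exp (-ε * A n y) * m x y
          = ∑ y ∈ T, Real.exp (-ε * A n y) * ∑ x : X, P x * m x y := by
            simp_rw [Finset.mul_sum]
            rw [Finset.sum_comm]
            exact Finset.sum_congr rfl fun y _ =>
              Finset.sum_congr rfl fun x _ => by ring
        _ = ∑ y ∈ T, Real.exp (-ε * A n y) * Real.exp (-Dmax) := by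
            refine Finset.sum_congr rfl fun y hy => ?_
            rw [hmP y ((hTmem y).1 hy)]
        _ = Φ n * Real.exp (-Dmax) := by rw [← Finset.sum_mul]
    calc Φ n * Real.exp (-Dmax)
        = ∑ x : X, P x * ∑ y ∈ T, Real.exp (-ε * A n y) * m x y := havg.symm
      _ ≤ ∑ x : X, P x * ∑ y ∈ T, Real.exp (-ε * A n y) * m (xl l) y := by
          refine Finset.sum_le_sum fun x _ => ?_
          exact mul_le_mul_of_nonneg_left (hg x) (hP0 x)
      _ = ∑ y ∈ T, Real.exp (-ε * A n y) * c n y := by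
          rw [← Finset.sum_mul, hP1, one_mul]
          exact Finset.sum_congr rfl fun y _ => by rw [hcn]
  -- exponential inequality
  have hexpkey : ∀ t : ℝ, 0 ≤ t → Real.exp (-t) ≤ 1 - t + t ^ 2 := by
    intro t ht
    have h1 : Real.exp (-t) * Real.exp t = 1 := by rw [← Real.exp_add]; simp
    have h2 : (0:ℝ) ≤ 1 - t + t ^ 2 := by nlinarith [sq_nonneg (t - 1), sq_nonneg t]
    have h3 : 1 + t ≤ Real.exp t := by linarith [Real.add_one_le_exp t]
    nlinarith [mul_le_mul_of_nonneg_left h3 h2, Real.exp_pos t, Real.exp_pos (-t)]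
  have hee : 0 ≤ ε - ε ^ 2 := by nlinarith
  -- one step of the potential argument
  have hstep : ∀ n, n < L →
      Φ (n + 1) ≤ Φ n * Real.exp (-((ε - ε ^ 2) * Real.exp (-Dmax))) := by
    intro n hn
    have h1 : Φ (n + 1) = ∑ y ∈ T, Real.exp (-ε * A n y) * Real.exp (-(ε * c n y)) := by
      simp only [hΦdef, hAdef]
      refine Finset.sum_congr rfl fun y _ => ?_
      rw [← Real.exp_add, Finset.sum_range_succ]
      ring_nf
    have h2 : Φ (n + 1) ≤ ∑ y ∈ T, Real.exp (-ε * A n y) * (1 - (ε - ε ^ 2) * c n y) := by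
      rw [h1]
      refine Finset.sum_le_sum fun y hy => ?_
      have hy' : 0 < WPS y := (hTmem y).1 hy
      have hcc0 := hc0 n y
      have hcc1 := hc1 n y hy'
      have hexp : Real.exp (-(ε * c n y)) ≤ 1 - ε * c n y + (ε * c n y) ^ 2 :=
        hexpkey _ (mul_nonneg hε0.le hcc0)
      have hsq : (ε * c n y) ^ 2 ≤ ε ^ 2 * c n y := by
        nlinarith [mul_nonneg (sq_nonneg ε) (mul_nonneg hcc0 (sub_nonneg.2 hcc1))]
      have hb : Real.exp (-(ε * c n y)) ≤ 1 - (ε - ε ^ 2) * c n y := by nlinarith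
      exact mul_le_mul_of_nonneg_left hb (Real.exp_pos _).le
    have h3 : ∑ y ∈ T, Real.exp (-ε * A n y) * (1 - (ε - ε ^ 2) * c n y)
        = Φ n - (ε - ε ^ 2) * ∑ y ∈ T, Real.exp (-ε * A n y) * c n y := by
      rw [Finset.mul_sum, ← Finset.sum_sub_distrib]
      exact Finset.sum_congr rfl fun y _ => by ring
    have h4 := hgw n hn
    have h5 : 1 - (ε - ε ^ 2) * Real.exp (-Dmax)
        ≤ Real.exp (-((ε - ε ^ 2) * Real.exp (-Dmax))) := by
      linarith [Real.add_one_le_exp (-((ε - ε ^ 2) * Real.exp (-Dmax)))]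
    have h6 : Φ (n + 1) ≤ Φ n * (1 - (ε - ε ^ 2) * Real.exp (-Dmax)) := by
      have := mul_le_mul_of_nonneg_left h4 hee
      rw [h3] at h2
      nlinarith
    calc Φ (n + 1) ≤ Φ n * (1 - (ε - ε ^ 2) * Real.exp (-Dmax)) := h6
      _ ≤ Φ n * Real.exp (-((ε - ε ^ 2) * Real.exp (-Dmax))) :=
          mul_le_mul_of_nonneg_left h5 (hΦpos n).le
  -- iterate
  have hiter : ∀ n, n ≤ L →
      Φ n ≤ Φ 0 * Real.exp (-(n : ℝ) * ((ε - ε ^ 2) * Real.exp (-Dmax))) := by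
    intro n
    induction n with
    | zero => intro _; simp
    | succ k ih =>
      intro hk
      have hkL : k < L := hk
      calc Φ (k + 1) ≤ Φ k * Real.exp (-((ε - ε ^ 2) * Real.exp (-Dmax))) :=
            hstep k hkL
        _ ≤ (Φ 0 * Real.exp (-(k : ℝ) * ((ε - ε ^ 2) * Real.exp (-Dmax)))) *
              Real.exp (-((ε - ε ^ 2) * Real.exp (-Dmax))) :=
            mul_le_mul_of_nonneg_right (ih hkL.le) (Real.exp_pos _).le
        _ = Φ 0 * Real.exp (-((k : ℕ) + 1 : ℝ) * ((ε - ε ^ 2) * Real.exp (-Dmax))) := by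
            rw [mul_assoc, ← Real.exp_add]; ring_nf
        _ = Φ 0 * Real.exp (-((k + 1 : ℕ) : ℝ) * ((ε - ε ^ 2) * Real.exp (-Dmax))) := by
            push_cast; ring_nf
  have hΦ0 : Φ 0 = T.card := by
    simp only [hΦdef, hAdef]
    simp
  -- lower bound on the accumulated cost for each y ∈ T
  have hlogY : Real.log (T.card) ≤ (L : ℝ) * ε ^ 2 * Real.exp (-Dmax) := by
    have h1 : (T.card : ℝ) ≤ (Fintype.card Y : ℝ) := by
      exact_mod_cast Finset.card_le_univ T
    have h2 : Real.log (T.card) ≤ Real.log (Fintype.card Y) :=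
      Real.log_le_log (by exact_mod_cast hTcard) h1
    have h3 : Real.exp Dmax * Real.log (Fintype.card Y) ≤ (L : ℝ) * ε ^ 2 := by
      rw [ge_iff_le, div_le_iff₀ (by positivity)] at hL
      linarith
    have h4 := mul_le_mul_of_nonneg_right h3 (Real.exp_pos (-Dmax)).le
    rw [mul_comm (Real.exp Dmax), mul_assoc, ← Real.exp_add] at h4
    simp at h4
    calc Real.log (T.card) ≤ Real.log (Fintype.card Y) := h2
      _ ≤ (L : ℝ) * ε ^ 2 * Real.exp (-Dmax) := by
          rw [mul_assoc] at h4 ⊢; exact h4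
  have hA_lb : ∀ y ∈ T, (1 - 2 * ε) * L * Real.exp (-Dmax) ≤ A L y := by
    intro y hy
    have h1 : Real.exp (-ε * A L y) ≤ Φ L :=
      Finset.single_le_sum (f := fun y => Real.exp (-ε * A L y))
        (fun y _ => (Real.exp_pos _).le) hy
    have h2 := (hiter L le_rfl).trans_eq' rfl
    have h3 : Real.exp (-ε * A L y) ≤
        (T.card : ℝ) * Real.exp (-(L : ℝ) * ((ε - ε ^ 2) * Real.exp (-Dmax))) := by
      calc Real.exp (-ε * A L y) ≤ Φ L := h1
        _ ≤ Φ 0 * Real.exp (-(L : ℝ) * ((ε - ε ^ 2) * Real.exp (-Dmax))) :=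
            hiter L le_rfl
        _ = (T.card : ℝ) * Real.exp (-(L : ℝ) * ((ε - ε ^ 2) * Real.exp (-Dmax))) := by
            rw [hΦ0]
    have h4 : -ε * A L y ≤
        Real.log (T.card) + (-(L : ℝ) * ((ε - ε ^ 2) * Real.exp (-Dmax))) := by
      have := Real.log_le_log (Real.exp_pos _) h3
      rw [Real.log_exp, Real.log_mul (by positivity) (Real.exp_pos _).ne',
        Real.log_exp] at this
      exact this
    have h5 : ε * ((1 - 2 * ε) * ((L : ℝ) * Real.exp (-Dmax))) ≤ ε * A L y := by
      linarith [hlogY, h4]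
    have h6 := le_of_mul_le_mul_left h5 hε0
    linarith
  -- pointwise lower bound on WC
  have hWCS : ∀ y, (1 - 2 * ε) * WPS y ≤ (1 / (L : ℝ)) * ∑ l : Fin L, WxS (xl l) y := by
    intro y
    have hL0 : (0:ℝ) < L := by exact_mod_cast hLpos
    by_cases hy : 0 < WPS y
    · have hyT : y ∈ T := (hTmem y).2 hy
      have h1 : A L y = (∑ l : Fin L, WxS (xl l) y) / WPS y * Real.exp (-Dmax) := by
        simp only [hAdef]
        rw [← Fin.sum_univ_eq_sum_range (fun i => c i y) L, Finset.sum_div,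
          Finset.sum_mul]
        refine Finset.sum_congr rfl fun l _ => ?_
        simp only [hcdef]
        rw [dif_pos l.isLt, hm]
      have h2 := hA_lb y hyT
      rw [h1] at h2
      have hE := Real.exp_pos (-Dmax)
      have h3 : (1 - 2 * ε) * L ≤ (∑ l : Fin L, WxS (xl l) y) / WPS y :=
        (mul_le_mul_iff_of_pos_right hE).1 h2
      have h5 : (1 - 2 * ε) * L * WPS y ≤ ∑ l : Fin L, WxS (xl l) y :=
        (le_div_iff₀ hy).1 h3
      have h6 := mul_le_mul_of_nonneg_left h5 (by positivity : (0:ℝ) ≤ 1 / L)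
      calc (1 - 2 * ε) * WPS y = (1 / (L:ℝ)) * ((1 - 2 * ε) * L * WPS y) := by
            field_simp
        _ ≤ (1 / (L:ℝ)) * ∑ l : Fin L, WxS (xl l) y := h6
    · have hy0 : WPS y = 0 := le_antisymm (not_lt.1 hy) (hWPS0 y)
      rw [hy0, mul_zero]
      exact mul_nonneg (by positivity)
        (Finset.sum_nonneg fun l _ => hWxS0 _ _)
  have hWCge : ∀ y, (1 - 2 * ε) * WPS y ≤ WC y := by
    intro y
    refine (hWCS y).trans ?_
    rw [hWC]
    refine mul_le_mul_of_nonneg_left ?_ (by positivity)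
    exact Finset.sum_le_sum fun l _ => hWxSW _ _
  -- sums of distributions
  have hWPsum : ∑ y : Y, WP y = 1 := by
    simp_rw [hWP]
    rw [Finset.sum_comm]
    simp_rw [← Finset.mul_sum, hW1, mul_one]
    exact hP1
  have hWCsum : ∑ y : Y, WC y = 1 := by
    have hL0 : ((L : ℕ) : ℝ) ≠ 0 := by exact_mod_cast hLpos.ne'
    calc ∑ y : Y, WC y = (1 / (L : ℝ)) * ∑ y : Y, ∑ l : Fin L, W (xl l) y := by
          rw [Finset.mul_sum]; exact Finset.sum_congr rfl fun y _ => hWC y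
      _ = (1 / (L : ℝ)) * ∑ l : Fin L, ∑ y : Y, W (xl l) y := by rw [Finset.sum_comm]
      _ = (1 / (L : ℝ)) * L := by
          rw [Finset.sum_congr rfl fun l _ => hW1 (xl l)]
          simp
      _ = 1 := by field_simp
  have hWPSsum : ∑ y : Y, WPS y ≤ 1 := by
    rw [← hWPsum]
    refine Finset.sum_le_sum fun y _ => ?_
    rw [hWPS, hWP]
    exact Finset.sum_le_sum fun x _ =>
      mul_le_mul_of_nonneg_left (hWxSW x y) (hP0 x)
  have hWPSle : ∀ y, WPS y ≤ WP y := by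
    intro y; rw [hWPS, hWP]
    exact Finset.sum_le_sum fun x _ =>
      mul_le_mul_of_nonneg_left (hWxSW x y) (hP0 x)
  -- the off-S mass
  have hSc : ∑ y : Y, (WP y - WPS y) = ∑ p ∈ Sᶜ, P p.1 * W p.1 p.2 := by
    have h1 : ∑ y : Y, (WP y - WPS y)
        = ∑ p ∈ (univ : Finset (X × Y)), (P p.1 * W p.1 p.2 - P p.1 * WxS p.1 p.2) := by
      rw [← Finset.univ_product_univ, Finset.sum_product]
      rw [Finset.sum_comm]
      refine Finset.sum_congr rfl fun y _ => ?_
      rw [hWP, hWPS, ← Finset.sum_sub_distrib]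
    rw [h1, ← Finset.sum_compl_add_sum S]
    have h2 : ∑ p ∈ S, (P p.1 * W p.1 p.2 - P p.1 * WxS p.1 p.2) = 0 := by
      refine Finset.sum_eq_zero fun p hp => ?_
      rw [hWxS, if_pos]
      · ring
      · exact hp
    have h3 : ∑ p ∈ Sᶜ, (P p.1 * W p.1 p.2 - P p.1 * WxS p.1 p.2)
        = ∑ p ∈ Sᶜ, P p.1 * W p.1 p.2 := by
      refine Finset.sum_congr rfl fun p hp => ?_
      rw [hWxS, if_neg (Finset.mem_compl.1 hp)]
      ring
    rw [h2, h3, add_zero]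
  -- final conversion of total variation
  have h0 : ∑ y : Y, (WP y - WC y) = 0 := by
    rw [Finset.sum_sub_distrib, hWPsum, hWCsum]; ring
  have habs : ∑ y : Y, |WP y - WC y| = 2 * ∑ y : Y, max (WP y - WC y) 0 := by
    have hpt : ∀ y : Y, |WP y - WC y| = 2 * max (WP y - WC y) 0 - (WP y - WC y) := by
      intro y
      rcases le_total 0 (WP y - WC y) with h | h
      · rw [abs_of_nonneg h, max_eq_left h]; ring
      · rw [abs_of_nonpos h, max_eq_right h]; ring
    rw [Finset.sum_congr rfl fun y _ => hpt y, Finset.sum_sub_distrib, h0,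
      ← Finset.mul_sum]
    ring
  have hmaxle : ∑ y : Y, max (WP y - WC y) 0
      ≤ ∑ y : Y, ((WP y - WPS y) + 2 * ε * WPS y) := by
    refine Finset.sum_le_sum fun y _ => ?_
    refine max_le ?_ ?_
    · linarith only [hWCge y]
    · have h1 := mul_nonneg hε0.le (hWPS0 y)
      linarith only [hWPSle y, h1]
  have hfinal : ∑ y : Y, ((WP y - WPS y) + 2 * ε * WPS y)
      ≤ ∑ p ∈ Sᶜ, P p.1 * W p.1 p.2 + 2 * ε := by
    rw [Finset.sum_add_distrib, hSc, ← Finset.mul_sum]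
    have : 2 * ε * ∑ y : Y, WPS y ≤ 2 * ε * 1 :=
      mul_le_mul_of_nonneg_left hWPSsum (by linarith)
    linarith
  rw [habs]
  linarith
end
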